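/- In the Banach summability setup, let Z be the norm-closure in X* of the linear span of {ψ_k : k ≥ 0}. Suppose there exists at least one matrix A⁰ satisfying Σ_k |a⁰_{nk}|‖P_k‖ < ∞ for each n, such that S_n^{A⁰}x → x (weakly or in norm) for all x ∈ X. Then for every matrix A satisfying Σ_k |a_{nk}|‖P_k‖ < ∞ for each n, the following are equivalent: (i) S_n^A x → x weakly for all x ∈ X; (ii) S_n^A x → x in norm for all x ∈ X; (iii) (S_n^A)*φ → φ weak* for all φ ∈ X*; (iv) (S_n^A)*φ → φ weak* for all φ ∈ Z; (v) (S_n^A)*φ → φ in norm for all φ ∈ Z. If, in addition, X is reflexive, these are equivalent to: (vi) (S_n^A)*φ → φ in norm for all φ ∈ X*. -/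

import Mathlib

open Filter Topology

variable {𝕜 X : Type*} [RCLike 𝕜] [NormedAddCommGroup X] [NormedSpace 𝕜 X] [CompleteSpace X]

/-- The summation operator `S n ^ A x = Σ_k a n k (⟨x, ψ k⟩/⟨e k, ψ k⟩) e k`. -/
noncomputable def summationOp (a : ℕ → ℕ → 𝕜) (e : ℕ → X) (ψ : ℕ → StrongDual 𝕜 X)
    (n : ℕ) (x : X) : X :=
  ∑' k : ℕ, (a n k * (ψ k x / ψ k (e k))) • e k

/-- The adjoint summation operator `(S n ^ A)* φ = Σ_k a n k (⟨e k, φ⟩/⟨e k, ψ k⟩) ψ k`. -/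
noncomputable def summationOpStar (a : ℕ → ℕ → 𝕜) (e : ℕ → X) (ψ : ℕ → StrongDual 𝕜 X)
    (n : ℕ) (φ : StrongDual 𝕜 X) : StrongDual 𝕜 X :=
  ∑' k : ℕ, (a n k * (φ (e k) / ψ k (e k))) • ψ k

set_option linter.unusedSectionVars false
set_option maxHeartbeats 1000000
set_option linter.unnecessarySimpa false

open NormedSpace

section Aux
variable {𝕜 E F : Type*} [RCLike 𝕜] [NormedAddCommGroup E] [NormedSpace 𝕜 E]
  [NormedAddCommGroup F] [NormedSpace 𝕜 F]

/-- Hahn–Banach: separate a point from a closed subspace. -/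
theorem aux_exists_dual_annihilator {p : Submodule 𝕜 E} (hp : IsClosed (p : Set E)) {x : E}
    (hx : x ∉ p) : ∃ f : StrongDual 𝕜 E, (∀ y ∈ p, f y = 0) ∧ f x ≠ 0 := by
  haveI : IsClosed (p : Set E) := hp
  have hxq : (Submodule.Quotient.mk x : E ⧸ p) ≠ 0 := by
    simpa [Submodule.Quotient.mk_eq_zero] using hx
  obtain ⟨g, _, hg2⟩ := exists_dual_vector 𝕜 (Submodule.Quotient.mk x : E ⧸ p) (norm_ne_zero_iff.2 hxq)
  set m : E →L[𝕜] E ⧸ p := LinearMap.mkContinuous p.mkQ 1 (fun y => by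
    simpa using Submodule.Quotient.norm_mk_le p y) with hm
  refine ⟨g.comp m, fun y hy => ?_, ?_⟩
  · have : m y = 0 := by
      simp only [hm, LinearMap.mkContinuous_apply, Submodule.mkQ_apply,
        Submodule.Quotient.mk_eq_zero]
      exact hy
    simp [this]
  · have : g (Submodule.Quotient.mk x) ≠ 0 := by
      rw [hg2]
      exact_mod_cast norm_ne_zero_iff.2 hxq
    simpa [hm] using this

theorem aux_bdd_of_tendsto {f : ℕ → F} {l : F} (h : Tendsto f atTop (𝓝 l)) :
    ∃ C, ∀ n, ‖f n‖ ≤ C := by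
  obtain ⟨C, hC⟩ := h.norm.bddAbove_range
  exact ⟨C, fun n => hC (Set.mem_range_self n)⟩

theorem aux_tsum_mem_closure {f : ℕ → F} (hf : Summable f) {p : Submodule 𝕜 F}
    (h : ∀ k, f k ∈ p) : ∑' k, f k ∈ closure (p : Set F) := by
  refine mem_closure_of_tendsto hf.hasSum.tendsto_sum_nat ?_
  exact Eventually.of_forall fun n => Submodule.sum_mem p fun k _ => h k

theorem aux_tendsto_id_on_closure {T : ℕ → F →L[𝕜] F} {C : ℝ} (hC : ∀ n, ‖T n‖ ≤ C)
    {p : Submodule 𝕜 F} (hp : ∀ y ∈ p, Tendsto (fun n => T n y) atTop (𝓝 y))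
    {x : F} (hx : x ∈ closure (p : Set F)) : Tendsto (fun n => T n x) atTop (𝓝 x) := by
  have hC0 : 0 ≤ C := le_trans (norm_nonneg _) (hC 0)
  rw [Metric.tendsto_atTop]
  intro ε hε
  have hδ : 0 < ε / (C + 2) := by positivity
  obtain ⟨y, hy, hxy⟩ := Metric.mem_closure_iff.1 hx _ hδ
  obtain ⟨N, hN⟩ := Metric.tendsto_atTop.1 (hp y hy) (ε / (C + 2)) hδ
  refine ⟨N, fun n hn => ?_⟩
  have h1 : T n x - x = T n (x - y) + (T n y - y) + (y - x) := by
    rw [map_sub]; abel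
  have h2 : ‖T n (x - y)‖ ≤ C * ‖x - y‖ :=
    le_trans ((T n).le_opNorm _) (by gcongr; exact hC n)
  have hxy' : ‖x - y‖ < ε / (C + 2) := by rwa [← dist_eq_norm]
  have hNy : ‖T n y - y‖ < ε / (C + 2) := by rw [← dist_eq_norm]; exact hN n hn
  rw [dist_eq_norm, h1]
  calc ‖T n (x - y) + (T n y - y) + (y - x)‖
      ≤ ‖T n (x - y)‖ + ‖T n y - y‖ + ‖y - x‖ := norm_add₃_le
    _ < C * (ε / (C + 2)) + ε / (C + 2) + ε / (C + 2) := by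
        have : ‖y - x‖ < ε / (C + 2) := by rwa [norm_sub_rev]
        have h2' : ‖T n (x - y)‖ ≤ C * (ε / (C + 2)) :=
          le_trans h2 (by gcongr)
        exact add_lt_add (add_lt_add_of_le_of_lt h2' hNy) this
    _ = ε * ((C + 2) / (C + 2)) := by ring
    _ ≤ ε := by rw [div_self (by positivity)]; simp

end Aux

section Ops

variable (a : ℕ → ℕ → 𝕜) (e : ℕ → X) (ψ : ℕ → StrongDual 𝕜 X)

/-- The summation operator as a continuous linear map. -/
noncomputable def sumCLM (n : ℕ) : X →L[𝕜] X :=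
  ∑' k : ℕ, (a n k / ψ k (e k)) • (ψ k).smulRight (e k)

/-- The adjoint summation operator as a continuous linear map. -/
noncomputable def sumCLMStar (n : ℕ) : StrongDual 𝕜 X →L[𝕜] StrongDual 𝕜 X :=
  ∑' k : ℕ, (a n k / ψ k (e k)) • (inclusionInDoubleDual 𝕜 X (e k)).smulRight (ψ k)

variable {a e ψ}
variable (hA : ∀ n, Summable fun k => ‖a n k‖ * (‖e k‖ * ‖ψ k‖ / ‖ψ k (e k)‖))

theorem norm_incl (y : X) : ‖inclusionInDoubleDual 𝕜 X y‖ = ‖y‖ :=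
  (inclusionInDoubleDualLi 𝕜 (E := X)).norm_map y

include hA

theorem summable_clm_term (n : ℕ) :
    Summable fun k => (a n k / ψ k (e k)) • (ψ k).smulRight (e k) := by
  refine Summable.of_norm ((hA n).congr fun k => ?_)
  rw [norm_smul, norm_div, ContinuousLinearMap.norm_smulRight_apply]
  ring

theorem summable_clm_star_term (n : ℕ) :
    Summable fun k => (a n k / ψ k (e k)) • (inclusionInDoubleDual 𝕜 X (e k)).smulRight (ψ k) := by
  haveI : NormSMulClass 𝕜 (StrongDual 𝕜 X →L[𝕜] StrongDual 𝕜 X) :=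
    @NormedSpace.toNormSMulClass 𝕜 (StrongDual 𝕜 X →L[𝕜] StrongDual 𝕜 X) _ _ inferInstance
  refine Summable.of_norm (E := StrongDual 𝕜 X →L[𝕜] StrongDual 𝕜 X) ((hA n).congr fun k => ?_)
  rw [norm_smul, norm_div, ContinuousLinearMap.norm_smulRight_apply, norm_incl]
  ring

theorem sumCLM_apply (n : ℕ) (x : X) : sumCLM a e ψ n x = summationOp a e ψ n x := by
  have h := (ContinuousLinearMap.apply 𝕜 X x).map_tsum (summable_clm_term hA n)
  simp only [ContinuousLinearMap.apply_apply] at h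
  rw [summationOp, sumCLM, h]
  refine tsum_congr fun k => ?_
  simp only [ContinuousLinearMap.apply_apply, ContinuousLinearMap.coe_smul',
    Pi.smul_apply, ContinuousLinearMap.smulRight_apply, smul_smul]
  congr 1
  ring

theorem sumCLMStar_apply (n : ℕ) (φ : StrongDual 𝕜 X) :
    sumCLMStar a e ψ n φ = summationOpStar a e ψ n φ := by
  have h := (ContinuousLinearMap.apply 𝕜 (StrongDual 𝕜 X) φ).map_tsum (summable_clm_star_term hA n)
  simp only [ContinuousLinearMap.apply_apply] at h
  rw [summationOpStar, sumCLMStar, h]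
  refine tsum_congr fun k => ?_
  simp only [ContinuousLinearMap.apply_apply, ContinuousLinearMap.coe_smul',
    Pi.smul_apply, ContinuousLinearMap.smulRight_apply, smul_smul, dual_def]
  congr 1
  ring


theorem summable_op_term (n : ℕ) (x : X) :
    Summable fun k => (a n k * (ψ k x / ψ k (e k))) • e k := by
  refine Summable.of_norm (Summable.of_nonneg_of_le (fun k => norm_nonneg _)
    (fun k => ?_) ((hA n).mul_right ‖x‖))
  rw [norm_smul, norm_mul, norm_div]
  calc ‖a n k‖ * (‖ψ k x‖ / ‖ψ k (e k)‖) * ‖e k‖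
      ≤ ‖a n k‖ * (‖ψ k‖ * ‖x‖ / ‖ψ k (e k)‖) * ‖e k‖ := by
        gcongr; exact (ψ k).le_opNorm x
    _ = ‖a n k‖ * (‖e k‖ * ‖ψ k‖ / ‖ψ k (e k)‖) * ‖x‖ := by ring

theorem summable_star_term (n : ℕ) (φ : StrongDual 𝕜 X) :
    Summable fun k => (a n k * (φ (e k) / ψ k (e k))) • ψ k := by
  refine Summable.of_norm (Summable.of_nonneg_of_le (fun k => norm_nonneg _)
    (fun k => ?_) ((hA n).mul_right ‖φ‖))
  rw [norm_smul, norm_mul, norm_div]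
  calc ‖a n k‖ * (‖φ (e k)‖ / ‖ψ k (e k)‖) * ‖ψ k‖
      ≤ ‖a n k‖ * (‖φ‖ * ‖e k‖ / ‖ψ k (e k)‖) * ‖ψ k‖ := by
        gcongr; exact φ.le_opNorm (e k)
    _ = ‖a n k‖ * (‖e k‖ * ‖ψ k‖ / ‖ψ k (e k)‖) * ‖φ‖ := by ring

/-- The adjoint relation. -/
theorem star_apply_eq (n : ℕ) (φ : StrongDual 𝕜 X) (x : X) :
    summationOpStar a e ψ n φ x = φ (summationOp a e ψ n x) := by
  rw [summationOpStar, summationOp]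
  have h1 := (inclusionInDoubleDual 𝕜 X x).map_tsum (summable_star_term hA n φ)
  simp only [dual_def] at h1
  rw [h1, φ.map_tsum (summable_op_term hA n x)]
  refine tsum_congr fun k => ?_
  simp only [ContinuousLinearMap.coe_smul', Pi.smul_apply, map_smul, smul_eq_mul]
  ring

theorem star_mem_Z (n : ℕ) (φ : StrongDual 𝕜 X) :
    summationOpStar a e ψ n φ ∈
      closure ((Submodule.span 𝕜 (Set.range ψ)) : Set (StrongDual 𝕜 X)) := by
  refine aux_tsum_mem_closure (summable_star_term hA n φ) fun k => ?_
  exact Submodule.smul_mem _ _ (Submodule.subset_span (Set.mem_range_self k))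

theorem op_mem_Y (n : ℕ) (x : X) :
    summationOp a e ψ n x ∈
      closure ((Submodule.span 𝕜 (Set.range e)) : Set X) := by
  refine aux_tsum_mem_closure (summable_op_term hA n x) fun k => ?_
  exact Submodule.smul_mem _ _ (Submodule.subset_span (Set.mem_range_self k))

theorem starNorm_le (n : ℕ) (φ : StrongDual 𝕜 X) :
    ‖summationOpStar a e ψ n φ‖ ≤ ‖sumCLM a e ψ n‖ * ‖φ‖ := by
  refine ContinuousLinearMap.opNorm_le_bound _ (by positivity) fun x => ?_
  rw [star_apply_eq hA, ← sumCLM_apply hA]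
  calc ‖φ (sumCLM a e ψ n x)‖ ≤ ‖φ‖ * ‖sumCLM a e ψ n x‖ := φ.le_opNorm _
    _ ≤ ‖φ‖ * (‖sumCLM a e ψ n‖ * ‖x‖) := by gcongr; exact (sumCLM a e ψ n).le_opNorm x
    _ = ‖sumCLM a e ψ n‖ * ‖φ‖ * ‖x‖ := by ring

omit hA

variable (horth : ∀ j k : ℕ, j ≠ k → ψ k (e j) = 0) (hnz : ∀ k, ψ k (e k) ≠ 0)
include horth hnz

theorem op_e (n j : ℕ) : summationOp a e ψ n (e j) = a n j • e j := by
  rw [summationOp]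
  rw [tsum_eq_single j (fun k hk => by rw [horth j k (Ne.symm hk)]; simp)]
  rw [div_self (hnz j), mul_one]

theorem star_psi (n j : ℕ) : summationOpStar a e ψ n (ψ j) = a n j • ψ j := by
  rw [summationOpStar]
  rw [tsum_eq_single j (fun k hk => by rw [horth k j hk]; simp; exact zero_smul 𝕜 (ψ k))]
  rw [div_self (hnz j), mul_one]

end Ops

/-- **Theorem 3.1 (main equivalence).** In the Banach summability set-up, given at least one
matrix `a0` whose summation operators converge (weakly or in norm) to the identity, then for
every admissible matrix `a`, with `Z` the norm-closure of the span of `{ψ k}`, the statements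
(i) weak convergence of `S n ^ A x` to `x`, (ii) norm convergence, (iii) weak*-convergence of the
adjoints on all of `X*`, (iv) weak*-convergence of the adjoints on `Z`, and (v) norm convergence
of the adjoints on `Z`, are all equivalent; and if `X` is reflexive they are equivalent to
(vi) norm convergence of the adjoints on all of `X*`. -/
theorem summability_equivalence (e : ℕ → X) (ψ : ℕ → StrongDual 𝕜 X)
    (horth : ∀ j k : ℕ, j ≠ k → ψ k (e j) = 0) (hnz : ∀ k, ψ k (e k) ≠ 0)
    (hA0 : ∃ a0 : ℕ → ℕ → 𝕜,
      (∀ n, Summable fun k => ‖a0 n k‖ * (‖e k‖ * ‖ψ k‖ / ‖ψ k (e k)‖)) ∧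
      ((∀ x : X, ∀ φ : StrongDual 𝕜 X,
          Tendsto (fun n => φ (summationOp a0 e ψ n x)) atTop (𝓝 (φ x))) ∨
        (∀ x : X, Tendsto (fun n => summationOp a0 e ψ n x) atTop (𝓝 x))))
    (a : ℕ → ℕ → 𝕜)
    (hA : ∀ n, Summable fun k => ‖a n k‖ * (‖e k‖ * ‖ψ k‖ / ‖ψ k (e k)‖)) :
    let Z : Set (StrongDual 𝕜 X) :=
      closure (Submodule.span 𝕜 (Set.range ψ) : Set (StrongDual 𝕜 X))
    ([(∀ x : X, ∀ φ : StrongDual 𝕜 X,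
        Tendsto (fun n => φ (summationOp a e ψ n x)) atTop (𝓝 (φ x))),
      (∀ x : X, Tendsto (fun n => summationOp a e ψ n x) atTop (𝓝 x)),
      (∀ φ : StrongDual 𝕜 X, ∀ x : X,
        Tendsto (fun n => summationOpStar a e ψ n φ x) atTop (𝓝 (φ x))),
      (∀ φ ∈ Z, ∀ x : X,
        Tendsto (fun n => summationOpStar a e ψ n φ x) atTop (𝓝 (φ x))),
      (∀ φ ∈ Z, Tendsto (fun n => summationOpStar a e ψ n φ) atTop (𝓝 φ))].TFAE) ∧
    (Function.Surjective (NormedSpace.inclusionInDoubleDual 𝕜 X) →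
      ((∀ x : X, ∀ φ : StrongDual 𝕜 X,
          Tendsto (fun n => φ (summationOp a e ψ n x)) atTop (𝓝 (φ x))) ↔
        (∀ φ : StrongDual 𝕜 X,
          Tendsto (fun n => summationOpStar a e ψ n φ) atTop (𝓝 φ)))) := by
  intro Z
  obtain ⟨a0, hA0s, hA0conv⟩ := hA0
  set Zsub : Submodule 𝕜 (StrongDual 𝕜 X) := (Submodule.span 𝕜 (Set.range ψ)).topologicalClosure
    with hZsub
  have hZcoe : (Zsub : Set (StrongDual 𝕜 X)) = Z := Submodule.topologicalClosure_coe _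
  haveI : CompleteSpace Zsub :=
    (Submodule.isClosed_topologicalClosure _).completeSpace_coe
  letI : SeminormedAddCommGroup (Zsub →L[𝕜] 𝕜) :=
    ContinuousLinearMap.toSeminormedAddCommGroup (σ₁₂ := RingHom.id 𝕜) (E := Zsub) (F := 𝕜)
  -- weak convergence for `a0`
  have h0w : ∀ (x : X) (φ : StrongDual 𝕜 X),
      Tendsto (fun m => φ (summationOp a0 e ψ m x)) atTop (𝓝 (φ x)) := by
    rcases hA0conv with h | h
    · exact h
    · exact fun x φ => (φ.continuous.tendsto x).comp (h x)
  -- uniform bound for the `a0` operators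
  obtain ⟨M0, hM0⟩ : ∃ M0, ∀ m, ‖sumCLM a0 e ψ m‖ ≤ M0 := by
    apply banach_steinhaus
    intro x
    obtain ⟨C, hC⟩ := banach_steinhaus
      (g := fun m => inclusionInDoubleDual 𝕜 X (summationOp a0 e ψ m x))
      (fun φ => by simpa [dual_def] using aux_bdd_of_tendsto (h0w x φ))
    refine ⟨C, fun m => ?_⟩
    have := hC m
    rw [norm_incl] at this
    rwa [sumCLM_apply hA0s]
  have hM0nn : 0 ≤ M0 := le_trans (norm_nonneg _) (hM0 0)
  -- a_{nj} → 1, given (4)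
  have hanj : (∀ φ ∈ Z, ∀ x : X,
        Tendsto (fun n => summationOpStar a e ψ n φ x) atTop (𝓝 (φ x))) →
      ∀ j, Tendsto (fun n => a n j) atTop (𝓝 1) := by
    intro h4 j
    have hψZ : ψ j ∈ Z := subset_closure (Submodule.subset_span (Set.mem_range_self j))
    have h := h4 (ψ j) hψZ (e j)
    have heq : ∀ n, summationOpStar a e ψ n (ψ j) (e j) = a n j * ψ j (e j) := fun n => by
      rw [star_psi horth hnz]; simp
    rw [tendsto_congr heq] at h
    have h2 := h.div_const (ψ j (e j))
    have heq2 : ∀ n, a n j * ψ j (e j) / ψ j (e j) = a n j := fun n => by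
      rw [mul_div_assoc, div_self (hnz j), mul_one]
    rwa [tendsto_congr heq2, div_self (hnz j)] at h2
  -- the key uniform bound, given (4)
  have hKey : (∀ φ ∈ Z, ∀ x : X,
        Tendsto (fun n => summationOpStar a e ψ n φ x) atTop (𝓝 (φ x))) →
      ∃ C, 0 ≤ C ∧ ∀ n, ‖sumCLM a e ψ n‖ ≤ C := by
    intro h4
    obtain ⟨C, hC⟩ : ∃ C, ∀ n, ‖sumCLM a e ψ n‖ ≤ C := by
      apply banach_steinhaus
      intro x
      -- Banach–Steinhaus over Z for the functionals φ' ↦ (S_n^* φ') x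
      obtain ⟨Cx, hCx⟩ : ∃ Cx, ∀ n,
          ‖(inclusionInDoubleDual 𝕜 X x).comp ((sumCLMStar a e ψ n).comp Zsub.subtypeL)‖ ≤ Cx := by
        apply banach_steinhaus
        intro φ'
        have hmem : (φ' : StrongDual 𝕜 X) ∈ Z := by rw [← hZcoe]; exact φ'.2
        have ht := h4 (φ' : StrongDual 𝕜 X) hmem x
        obtain ⟨C', hC'⟩ := aux_bdd_of_tendsto ht
        refine ⟨C', fun n => ?_⟩
        have : (inclusionInDoubleDual 𝕜 X x).comp ((sumCLMStar a e ψ n).comp Zsub.subtypeL) φ'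
            = summationOpStar a e ψ n (φ' : StrongDual 𝕜 X) x := by
          simp [dual_def, sumCLMStar_apply hA]
        rw [this]
        exact hC' n
      have hCxnn : 0 ≤ Cx := le_trans (norm_nonneg
        ((inclusionInDoubleDual 𝕜 X x).comp ((sumCLMStar a e ψ 0).comp Zsub.subtypeL))) (hCx 0)
      refine ⟨Cx * M0, fun n => ?_⟩
      refine norm_le_dual_bound 𝕜 _ (by positivity) fun φ => ?_
      -- φ (S_n x) is the limit over m of (S_n^* (S_m^{0*} φ)) x
      have hlim : Tendsto (fun m => summationOpStar a e ψ n (summationOpStar a0 e ψ m φ) x)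
          atTop (𝓝 (φ (sumCLM a e ψ n x))) := by
        have heq : ∀ m, summationOpStar a e ψ n (summationOpStar a0 e ψ m φ) x
            = φ (summationOp a0 e ψ m (summationOp a e ψ n x)) := fun m => by
          rw [star_apply_eq hA, star_apply_eq hA0s]
        rw [tendsto_congr heq, sumCLM_apply hA]
        exact h0w (summationOp a e ψ n x) φ
      refine le_of_tendsto hlim.norm (Eventually.of_forall fun m => ?_)
      have hmemZ : summationOpStar a0 e ψ m φ ∈ Zsub := by
        rw [← SetLike.mem_coe, hZcoe]
        exact star_mem_Z hA0s m φ
      have hval : summationOpStar a e ψ n (summationOpStar a0 e ψ m φ) x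
          = (inclusionInDoubleDual 𝕜 X x).comp ((sumCLMStar a e ψ n).comp Zsub.subtypeL)
              ⟨summationOpStar a0 e ψ m φ, hmemZ⟩ := by
        simp [dual_def, sumCLMStar_apply hA]
      rw [hval]
      calc ‖(inclusionInDoubleDual 𝕜 X x).comp ((sumCLMStar a e ψ n).comp Zsub.subtypeL)
              ⟨summationOpStar a0 e ψ m φ, hmemZ⟩‖
          ≤ Cx * ‖(⟨summationOpStar a0 e ψ m φ, hmemZ⟩ : Zsub)‖ :=
            ContinuousLinearMap.le_of_opNorm_le (h := hCx n) (x := _)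
        _ = Cx * ‖summationOpStar a0 e ψ m φ‖ := rfl
        _ ≤ Cx * (M0 * ‖φ‖) := by
            refine mul_le_mul_of_nonneg_left ?_ hCxnn
            refine le_trans (starNorm_le hA0s m φ) ?_
            exact mul_le_mul_of_nonneg_right (hM0 m) (norm_nonneg φ)
        _ = Cx * M0 * ‖φ‖ := by ring
    exact ⟨max C 0, le_max_right _ _, fun n => le_trans (hC n) (le_max_left _ _)⟩
  -- (4) → (2)
  have h2of4 : (∀ φ ∈ Z, ∀ x : X,
        Tendsto (fun n => summationOpStar a e ψ n φ x) atTop (𝓝 (φ x))) →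
      ∀ x : X, Tendsto (fun n => summationOp a e ψ n x) atTop (𝓝 x) := by
    intro h4 x
    obtain ⟨C, hC0, hC⟩ := hKey h4
    have hspan : ∀ y ∈ Submodule.span 𝕜 (Set.range e),
        Tendsto (fun n => sumCLM a e ψ n y) atTop (𝓝 y) := by
      intro y hy
      induction hy using Submodule.span_induction with
      | mem z hz =>
        obtain ⟨j, rfl⟩ := hz
        have heq : ∀ n, sumCLM a e ψ n (e j) = a n j • e j := fun n => by
          rw [sumCLM_apply hA, op_e horth hnz]
        rw [tendsto_congr heq]
        simpa using (hanj h4 j).smul_const (e j)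
      | zero => simpa using tendsto_const_nhds
      | add u v hu hv ihu ihv => simpa using ihu.add ihv
      | smul c u hu ihu => simpa using ihu.const_smul c
    have hxmem : x ∈ closure ((Submodule.span 𝕜 (Set.range e)) : Set X) := by
      by_contra hx
      have hx' : x ∉ (Submodule.span 𝕜 (Set.range e)).topologicalClosure := by
        rwa [← SetLike.mem_coe, Submodule.topologicalClosure_coe]
      obtain ⟨f, hf0, hfx⟩ := aux_exists_dual_annihilator
        (Submodule.isClosed_topologicalClosure _) hx'
      have hzero : ∀ m, f (summationOp a0 e ψ m x) = 0 := fun m => by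
        refine hf0 _ ?_
        rw [← SetLike.mem_coe, Submodule.topologicalClosure_coe]
        exact op_mem_Y hA0s m x
      have hlim := h0w x f
      rw [tendsto_congr hzero] at hlim
      exact hfx (tendsto_nhds_unique hlim tendsto_const_nhds)
    have := aux_tendsto_id_on_closure hC hspan hxmem
    rw [tendsto_congr (fun n => sumCLM_apply hA n x)] at this
    exact this
  -- (4) → (5)
  have h5of4 : (∀ φ ∈ Z, ∀ x : X,
        Tendsto (fun n => summationOpStar a e ψ n φ x) atTop (𝓝 (φ x))) →
      ∀ φ ∈ Z, Tendsto (fun n => summationOpStar a e ψ n φ) atTop (𝓝 φ) := by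
    intro h4 φ hφ
    obtain ⟨C, hC0, hC⟩ := hKey h4
    have hCstar : ∀ n, ‖sumCLMStar a e ψ n‖ ≤ C := by
      intro n
      refine ContinuousLinearMap.opNorm_le_bound _ hC0 fun φ' => ?_
      rw [sumCLMStar_apply hA]
      refine le_trans (starNorm_le hA n φ') ?_
      exact mul_le_mul_of_nonneg_right (hC n) (norm_nonneg φ')
    have hspan : ∀ χ ∈ Submodule.span 𝕜 (Set.range ψ),
        Tendsto (fun n => sumCLMStar a e ψ n χ) atTop (𝓝 χ) := by
      intro χ hχ
      induction hχ using Submodule.span_induction with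
      | mem z hz =>
        obtain ⟨j, rfl⟩ := hz
        have heq : ∀ n, sumCLMStar a e ψ n (ψ j) = a n j • ψ j := fun n => by
          rw [sumCLMStar_apply hA, star_psi horth hnz]
        rw [tendsto_congr heq]
        simpa using (hanj h4 j).smul_const (ψ j)
      | zero => simpa using tendsto_const_nhds
      | add u v hu hv ihu ihv => simpa using ihu.add ihv
      | smul c u hu ihu => simpa using ihu.const_smul c
    have := aux_tendsto_id_on_closure hCstar hspan hφ
    rw [tendsto_congr (fun n => sumCLMStar_apply hA n φ)] at this
    exact this
  constructor
  · tfae_have 2 → 1 := fun h2 x φ => (φ.continuous.tendsto x).comp (h2 x)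
    tfae_have 1 → 3 := by
      intro h1 φ x
      rw [tendsto_congr (fun n => star_apply_eq hA n φ x)]
      exact h1 x φ
    tfae_have 3 → 1 := by
      intro h3 x φ
      rw [tendsto_congr (fun n => (star_apply_eq hA n φ x).symm)]
      exact h3 φ x
    tfae_have 3 → 4 := fun h3 φ _ x => h3 φ x
    tfae_have 4 → 2 := h2of4
    tfae_have 4 → 5 := h5of4
    tfae_have 5 → 4 := by
      intro h5 φ hφ x
      have := ((inclusionInDoubleDual 𝕜 X x).continuous.tendsto φ).comp (h5 φ hφ)
      simpa [Function.comp_def, dual_def] using this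
    tfae_finish
  · intro hsurj
    constructor
    · intro h1 φ
      have h3 : ∀ χ : StrongDual 𝕜 X, ∀ x : X,
          Tendsto (fun n => summationOpStar a e ψ n χ x) atTop (𝓝 (χ x)) := by
        intro χ x
        rw [tendsto_congr (fun n => star_apply_eq hA n χ x)]
        exact h1 x χ
      have h4 : ∀ χ ∈ Z, ∀ x : X,
          Tendsto (fun n => summationOpStar a e ψ n χ x) atTop (𝓝 (χ x)) :=
        fun χ _ x => h3 χ x
      have hφZ : φ ∈ Z := by
        by_contra hφ
        have hφ' : φ ∉ Zsub := by rwa [← SetLike.mem_coe, hZcoe]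
        obtain ⟨F, hF0, hFφ⟩ := aux_exists_dual_annihilator
          (Submodule.isClosed_topologicalClosure _) hφ'
        obtain ⟨x, hx⟩ := hsurj F
        have hzero : ∀ n, summationOpStar a e ψ n φ x = 0 := fun n => by
          have hmem : summationOpStar a e ψ n φ ∈ Zsub := by
            rw [← SetLike.mem_coe, hZcoe]
            exact star_mem_Z hA n φ
          have := hF0 _ hmem
          rwa [← hx, dual_def] at this
        have hlim := h3 φ x
        rw [tendsto_congr hzero] at hlim
        have : φ x = 0 := tendsto_nhds_unique hlim tendsto_const_nhds
        rw [← hx, dual_def] at hFφ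
        exact hFφ this
      exact h5of4 h4 φ hφZ
    · intro h6 x φ
      rw [tendsto_congr (fun n => (star_apply_eq hA n φ x).symm)]
      exact ((inclusionInDoubleDual 𝕜 X x).continuous.tendsto φ).comp (h6 φ)
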